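/- Core identity underlying the generalized cycle benchmarking protocol (Theorem 1 of the paper): let n, m ∈ ℕ, let p : Z2^n × Z2^n × V_m → ℝ with Pauli fidelities λ(x,y,Q) := Σ_{a,b,P} (-1)^{a·x + b·y + ⟨P,Q⟩} p(a,b,P), and let U_k(ρ) := Σ_{a,b,P} p(a,b,P) · (W(P) ⊗ E_{k+b,k+a}) ρ (W(P) ⊗ E_{k+b,k+a})†. Let G be a unitary on the (m+n)-qubit space and set T_k(ρ) := U_k(G ρ G†). Let l ≥ 1, let x_i, y_i ∈ Z2^n and Q_i ∈ V_m for i = 1,…,l, and let H_1,…,H_{l−1} be unitaries on the (m+n)-qubit space satisfying H_i (W(Q_i) ⊗ Z^{y_i}) H_i† = G† (W(Q_{i+1}) ⊗ Z^{x_{i+1}}) G for every 1 ≤ i ≤ l−1. Then for every complex matrix ρ on the (m+n)-qubit space: Σ_{m_1,…,m_l ∈ Z2^n} (-1)^{Σ_{i=1}^l m_i·(x_i+y_i)} · Tr((W(Q_l) ⊗ Z^{y_l}) · T_{m_l}(H_{l−1} ( ⋯ H_1 (T_{m_1}(ρ)) H_1† ⋯ ) H_{l−1}†)) = (Π_{i=1}^l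 λ(x_i,y_i,Q_i)) · Tr(G† (W(Q_1) ⊗ Z^{x_1}) G · ρ). -/

import Mathlib

open Finset Matrix Kronecker

/-- `m`-qubit Pauli operators modulo phase, as pairs of X- and Z-exponents per qubit. -/
abbrev V (m : ℕ) := Fin m → ZMod 2 × ZMod 2

/-- Symplectic inner product recording (non-)commutation of Pauli operators. -/
def sympl {m : ℕ} (P Q : V m) : ZMod 2 :=
  ∑ i, ((P i).1 * (Q i).2 + (P i).2 * (Q i).1)

/-- Dot product on `Z2^n`. -/
def dot {n : ℕ} (x y : Fin n → ZMod 2) : ZMod 2 := ∑ i, x i * y i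

/-- The real sign `(-1)^z` associated with `z : ZMod 2`. -/
def sgn (z : ZMod 2) : ℝ := (-1 : ℝ) ^ z.val

/-- The Hermitian Pauli matrix labeled by `v : V n`. -/
noncomputable def W {n : ℕ} (v : V n) :
    Matrix (Fin n → ZMod 2) (Fin n → ZMod 2) ℂ := fun j k =>
  Complex.I ^ (Finset.univ.filter (fun i => (v i).1 = 1 ∧ (v i).2 = 1)).card *
    (-1 : ℂ) ^ (∑ i, (v i).2 * k i : ZMod 2).val *
    (if j = (fun i => k i + (v i).1) then 1 else 0)

/-- `Z^x`: the purely-Z Pauli matrix with Z-exponents `x`. -/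
noncomputable def Zpow {n : ℕ} (x : Fin n → ZMod 2) :
    Matrix (Fin n → ZMod 2) (Fin n → ZMod 2) ℂ :=
  W (fun i => ((0 : ZMod 2), x i))

/-- Matrices on the `(m+n)`-qubit space. -/
abbrev MatP (m n : ℕ) :=
  Matrix ((Fin m → ZMod 2) × (Fin n → ZMod 2)) ((Fin m → ZMod 2) × (Fin n → ZMod 2)) ℂ

/-- The uniform stochastic instrument with Pauli error rates `p`:
`U_k(ρ) = Σ_{a,b,P} p(a,b,P) (W(P) ⊗ E_{k+b,k+a}) ρ (W(P) ⊗ E_{k+b,k+a})†`. -/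
noncomputable def instU (n m : ℕ)
    (p : (Fin n → ZMod 2) × (Fin n → ZMod 2) × V m → ℝ)
    (k : Fin n → ZMod 2) (ρ : MatP m n) : MatP m n :=
  ∑ a : Fin n → ZMod 2, ∑ b : Fin n → ZMod 2, ∑ P : V m,
    (p (a, b, P) : ℂ) •
      ((W P ⊗ₖ Matrix.single (k + b) (k + a) (1 : ℂ)) * ρ *
        (W P ⊗ₖ Matrix.single (k + b) (k + a) (1 : ℂ))ᴴ)


/-- The noisy MCM `T_k(ρ) := U_k(G ρ G†)`. -/
noncomputable def instT (n m : ℕ)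
    (p : (Fin n → ZMod 2) × (Fin n → ZMod 2) × V m → ℝ)
    (G : MatP m n) (k : Fin n → ZMod 2) (ρ : MatP m n) : MatP m n :=
  instU n m p k (G * ρ * Gᴴ)

/-- The repeated-MCM composition: `seq ... i ρ` is
`T_{ms i}(H_{i-1} (⋯ H_0 (T_{ms 0}(ρ)) H_0† ⋯) H_{i-1}†)`. -/
noncomputable def seq (n m : ℕ)
    (p : (Fin n → ZMod 2) × (Fin n → ZMod 2) × V m → ℝ)
    (G : MatP m n) (H : ℕ → MatP m n) (ms : ℕ → Fin n → ZMod 2) :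
    ℕ → MatP m n → MatP m n
  | 0, ρ => instT n m p G (ms 0) ρ
  | i + 1, ρ => instT n m p G (ms (i + 1))
      (H i * seq n m p G H ms i ρ * (H i)ᴴ)

/-!
Conjugating `W(Q) ⊗ Z^y` by a Kraus operator `W(P) ⊗ E_{k+b,k+a}` of `U_k` yields
`(-1)^{⟨P,Q⟩ + y·(k+b)} · W(Q) ⊗ E_{k+a,k+a}`. Weighting the outcome `k` by `(-1)^{k·(x+y)}`
and substituting `j = k + a`, the projectors `E_{j,j}` recombine into `W(Q) ⊗ Z^x` with the
coefficient `λ(x,y,Q)`. So one round turns the observable `W(Q) ⊗ Z^y` measured after `T` into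
`λ(x,y,Q) · G†(W(Q) ⊗ Z^x)G` measured before it, the hypothesis on `H_i` turns that into the
observable of the previous round, and induction on `l` finishes the proof.
-/

lemma sgn_add (a b : ZMod 2) : sgn (a + b) = sgn a * sgn b := by
  simp only [sgn, ← pow_add, ZMod.val_add]
  exact (neg_one_pow_eq_pow_mod_two _).symm

lemma sgn_mul_self (a : ZMod 2) : sgn a * sgn a = 1 := by
  rw [← sgn_add, CharTwo.add_self_eq_zero]
  norm_num [sgn]

lemma dot_eq_dotProduct {n : ℕ} (x y : Fin n → ZMod 2) : dot x y = x ⬝ᵥ y := rfl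

section Pauli

variable {n : ℕ}

def xPart (v : V n) : Fin n → ZMod 2 := fun i => (v i).1

def zPart (v : V n) : Fin n → ZMod 2 := fun i => (v i).2

noncomputable def phase (v : V n) : ℂ :=
  Complex.I ^ (univ.filter fun i => (v i).1 = 1 ∧ (v i).2 = 1).card

lemma star_phase_mul_phase (v : V n) : star (phase v) * phase v = 1 := by
  simp [phase, ← mul_pow]

lemma sympl_eq (v w : V n) :
    sympl v w = xPart v ⬝ᵥ zPart w + zPart v ⬝ᵥ xPart w := by
  simp only [sympl, dotProduct, xPart, zPart, sum_add_distrib]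

lemma sympl_comm (v w : V n) : sympl v w = sympl w v := by
  rw [sympl_eq, sympl_eq, dotProduct_comm (zPart v), dotProduct_comm (zPart w), add_comm]

lemma W_apply (v : V n) (j k : Fin n → ZMod 2) :
    W v j k = phase v * sgn (zPart v ⬝ᵥ k) * if j = k + xPart v then 1 else 0 := by
  simp only [W, phase, sgn, zPart, dotProduct]
  push_cast
  rfl

lemma W_mul_W_apply (v w : V n) (j k : Fin n → ZMod 2) :
    (W v * W w) j k = phase v * phase w * sgn (zPart v ⬝ᵥ (k + xPart w) + zPart w ⬝ᵥ k) *
      if j = k + (xPart w + xPart v) then 1 else 0 := by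
  rw [mul_apply, Fintype.sum_eq_single (k + xPart w)]
  · simp only [W_apply, add_assoc, if_true, sgn_add]
    push_cast
    ring
  · intro l hl
    simp [W_apply, hl]

lemma W_mul_W_comm (v w : V n) : W v * W w = (sgn (sympl v w) : ℂ) • (W w * W v) := by
  ext j k
  rw [Matrix.smul_apply, W_mul_W_apply, W_mul_W_apply, add_comm (xPart v), smul_eq_mul]
  have hsgn : sgn (zPart v ⬝ᵥ (k + xPart w) + zPart w ⬝ᵥ k) =
      sgn (sympl v w) * sgn (zPart w ⬝ᵥ (k + xPart v) + zPart v ⬝ᵥ k) := by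
    rw [← sgn_add, sympl_eq]
    congr 1
    simp only [dotProduct_add, dotProduct_comm (xPart v)]
    linear_combination (-(zPart w ⬝ᵥ xPart v)) * (CharTwo.two_eq_zero : (2 : ZMod 2) = 0)
  rw [hsgn]
  push_cast
  ring

lemma conjTranspose_W_mul_W (v : V n) : (W v)ᴴ * W v = 1 := by
  ext j k
  rw [mul_apply, Fintype.sum_eq_single (j + xPart v)]
  · simp only [conjTranspose_apply, W_apply, if_true, add_left_inj, one_apply]
    split_ifs with hjk
    · subst hjk
      have hsgn : star (sgn (zPart v ⬝ᵥ j) : ℂ) * sgn (zPart v ⬝ᵥ j) = 1 := by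
        rw [Complex.star_def, Complex.conj_ofReal, ← Complex.ofReal_mul, sgn_mul_self,
          Complex.ofReal_one]
      rw [mul_one, star_mul', mul_mul_mul_comm, star_phase_mul_phase, hsgn, one_mul]
    · simp
  · intro l hl
    simp [W_apply, hl]

lemma conjTranspose_W_mul_W_mul_W (P Q : V n) :
    (W P)ᴴ * W Q * W P = (sgn (sympl P Q) : ℂ) • W Q := by
  rw [Matrix.mul_assoc, W_mul_W_comm Q P, Matrix.mul_smul, ← Matrix.mul_assoc,
    conjTranspose_W_mul_W, Matrix.one_mul, sympl_comm]

lemma Zpow_eq_diagonal (x : Fin n → ZMod 2) :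
    Zpow x = diagonal fun j => (sgn (x ⬝ᵥ j) : ℂ) := by
  ext j k
  simp only [Zpow, W, diagonal_apply, sgn, dotProduct]
  split_ifs <;> simp_all

end Pauli

lemma kronecker_diagonal_eq_sum {ι κ R : Type*} [CommSemiring R] [Fintype κ] [DecidableEq κ]
    (A : Matrix ι ι R) (d : κ → R) :
    A ⊗ₖ diagonal d = ∑ j, d j • (A ⊗ₖ single j j 1) := by
  rw [← sum_single_eq_diagonal]
  simp_rw [← kronecker_smul, smul_single, smul_eq_mul, mul_one]
  exact map_sum (kroneckerBilinear (R := R) A) _ _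

lemma trace_conj_mul_conj {ι R : Type*} [Fintype ι] [DecidableEq ι] [CommSemiring R]
    {A B : Matrix ι ι R} (hBA : B * A = 1) (O S : Matrix ι ι R) :
    trace (A * O * B * (A * S * B)) = trace (O * S) := by
  rw [show A * O * B * (A * S * B) = A * (O * (B * A) * S) * B by simp only [Matrix.mul_assoc],
    hBA, Matrix.mul_one, trace_mul_cycle, hBA, Matrix.one_mul]

section OneRound

variable {n m : ℕ} (p : (Fin n → ZMod 2) × (Fin n → ZMod 2) × V m → ℝ)

def pauliFidelity (x y : Fin n → ZMod 2) (Q : V m) : ℝ :=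
  ∑ a : Fin n → ZMod 2, ∑ b : Fin n → ZMod 2, ∑ P : V m,
    sgn (dot a x + dot b y + sympl P Q) * p (a, b, P)

lemma conj_kronecker_Zpow (P Q : V m) (y u v : Fin n → ZMod 2) :
    (W P ⊗ₖ single u v (1 : ℂ))ᴴ * (W Q ⊗ₖ Zpow y) * (W P ⊗ₖ single u v 1) =
      ((sgn (sympl P Q) * sgn (y ⬝ᵥ u) : ℝ) : ℂ) • (W Q ⊗ₖ single v v 1) := by
  have hZ : single v u (1 : ℂ) * Zpow y * single u v 1 = (sgn (y ⬝ᵥ u) : ℂ) • single v v 1 := by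
    rw [single_mul_mul_single, Zpow_eq_diagonal, diagonal_apply_eq, smul_single, smul_eq_mul,
      one_mul, mul_one]
  rw [conjTranspose_kronecker, conjTranspose_single, star_one, ← mul_kronecker_mul,
    ← mul_kronecker_mul, conjTranspose_W_mul_W_mul_W, hZ, smul_kronecker, kronecker_smul,
    smul_smul, Complex.ofReal_mul]

lemma trace_kronecker_Zpow_mul (Q : V m) (x : Fin n → ZMod 2) (σ : MatP m n) :
    ((W Q ⊗ₖ Zpow x) * σ).trace =
      ∑ j, (sgn (x ⬝ᵥ j) : ℂ) * ((W Q ⊗ₖ single j j 1) * σ).trace := by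
  simp only [Zpow_eq_diagonal, kronecker_diagonal_eq_sum, Matrix.sum_mul, trace_sum,
    Matrix.smul_mul, trace_smul, smul_eq_mul]

lemma trace_kronecker_Zpow_mul_instU (Q : V m) (y k : Fin n → ZMod 2) (σ : MatP m n) :
    ((W Q ⊗ₖ Zpow y) * instU n m p k σ).trace =
      ∑ a, ∑ b, ∑ P, ((p (a, b, P) * (sgn (sympl P Q) * sgn (y ⬝ᵥ (k + b))) : ℝ) : ℂ) *
        ((W Q ⊗ₖ single (k + a) (k + a) 1) * σ).trace := by
  simp only [instU, Matrix.mul_sum, trace_sum, Matrix.mul_smul, trace_smul, smul_eq_mul]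
  refine sum_congr rfl fun a _ => sum_congr rfl fun b _ => sum_congr rfl fun P _ => ?_
  rw [← Matrix.mul_assoc, trace_mul_comm, ← Matrix.mul_assoc, ← Matrix.mul_assoc,
    conj_kronecker_Zpow, Matrix.smul_mul, trace_smul, smul_eq_mul]
  push_cast
  ring

theorem sum_sgn_mul_trace_instU (x y : Fin n → ZMod 2) (Q : V m) (σ : MatP m n) :
    ∑ k, (sgn (dot k (x + y)) : ℂ) * ((W Q ⊗ₖ Zpow y) * instU n m p k σ).trace =
      pauliFidelity p x y Q * ((W Q ⊗ₖ Zpow x) * σ).trace := by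
  rw [trace_kronecker_Zpow_mul, pauliFidelity]
  push_cast
  simp only [trace_kronecker_Zpow_mul_instU, mul_sum, sum_mul]
  rw [Finset.sum_comm]
  conv_rhs => rw [Finset.sum_comm]
  refine sum_congr rfl fun a _ => Fintype.sum_equiv (Equiv.addRight a) _ _ fun k => ?_
  refine sum_congr rfl fun b _ => sum_congr rfl fun P _ => ?_
  have hsgn : sgn (dot k (x + y)) * (sgn (sympl P Q) * sgn (y ⬝ᵥ (k + b))) =
      sgn (dot a x + dot b y + sympl P Q) * sgn (x ⬝ᵥ (k + a)) := by
    simp only [← sgn_add, dot_eq_dotProduct, dotProduct_add]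
    rw [dotProduct_comm y k, dotProduct_comm y b, dotProduct_comm x k, dotProduct_comm x a]
    congr 1
    linear_combination (k ⬝ᵥ y - a ⬝ᵥ x) * (CharTwo.two_eq_zero : (2 : ZMod 2) = 0)
  calc _ = ((sgn (dot k (x + y)) * (sgn (sympl P Q) * sgn (y ⬝ᵥ (k + b))) : ℝ) : ℂ) *
        p (a, b, P) * ((W Q ⊗ₖ single (k + a) (k + a) 1) * σ).trace := by
        push_cast
        ring
    _ = _ := by
      rw [hsgn, Equiv.coe_addRight]
      push_cast
      ring

theorem sum_sgn_mul_trace_instT (G : MatP m n) (x y : Fin n → ZMod 2) (Q : V m)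
    (σ : MatP m n) :
    ∑ k, (sgn (dot k (x + y)) : ℂ) * ((W Q ⊗ₖ Zpow y) * instT n m p G k σ).trace =
      pauliFidelity p x y Q * (Gᴴ * (W Q ⊗ₖ Zpow x) * G * σ).trace := by
  simp only [instT, sum_sgn_mul_trace_instU, Matrix.mul_assoc, trace_mul_comm Gᴴ]

end OneRound

def extendByZero {α : Type*} [Zero α] {l : ℕ} (f : Fin l → α) (i : ℕ) : α :=
  if h : i < l then f ⟨i, h⟩ else 0

lemma extendByZero_snoc_of_lt {α : Type*} [Zero α] {t : ℕ} (f : Fin t → α) (a : α) {i : ℕ}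
    (hi : i < t) : extendByZero (Fin.snoc f a : Fin (t + 1) → α) i = extendByZero f i := by
  simp only [extendByZero, hi, dif_pos, Nat.lt_succ_of_lt hi]
  exact Fin.snoc_castSucc (α := fun _ => α) a f ⟨i, hi⟩

lemma extendByZero_snoc_self {α : Type*} [Zero α] {t : ℕ} (f : Fin t → α) (a : α) :
    extendByZero (Fin.snoc f a : Fin (t + 1) → α) t = a := by
  simp only [extendByZero, Nat.lt_succ_self, dif_pos]
  exact Fin.snoc_last (α := fun _ => α) ..

section Sequence

variable {n m : ℕ} (p : (Fin n → ZMod 2) × (Fin n → ZMod 2) × V m → ℝ) (G : MatP m n)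
  (H : ℕ → MatP m n)

lemma seq_congr {ms ms' : ℕ → Fin n → ZMod 2} {t : ℕ} (h : ∀ i ≤ t, ms i = ms' i)
    (ρ : MatP m n) : seq n m p G H ms t ρ = seq n m p G H ms' t ρ := by
  induction t with
  | zero => rw [seq, seq, h 0 le_rfl]
  | succ t ih => rw [seq, seq, h (t + 1) le_rfl, ih fun i hi => h i (Nat.le_succ_of_le hi)]

lemma seq_extendByZero_snoc {t : ℕ} (ms : Fin (t + 1) → Fin n → ZMod 2) (k : Fin n → ZMod 2)
    (ρ : MatP m n) :
    seq n m p G H (extendByZero (Fin.snoc ms k : Fin (t + 2) → _)) (t + 1) ρ =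
      instT n m p G k (H t * seq n m p G H (extendByZero ms) t ρ * (H t)ᴴ) := by
  rw [seq, extendByZero_snoc_self,
    seq_congr p G H fun i hi => extendByZero_snoc_of_lt ms k (Nat.lt_succ_of_le hi)]

theorem sum_sgn_mul_trace_seq (x y : ℕ → Fin n → ZMod 2) (Q : ℕ → V m) (t : ℕ)
    (hHunitary : ∀ i < t, (H i)ᴴ * H i = 1)
    (hH : ∀ i < t, H i * (W (Q i) ⊗ₖ Zpow (y i)) * (H i)ᴴ =
      Gᴴ * (W (Q (i + 1)) ⊗ₖ Zpow (x (i + 1))) * G)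
    (ρ : MatP m n) :
    ∑ ms : Fin (t + 1) → Fin n → ZMod 2,
      (sgn (∑ i : Fin (t + 1), dot (ms i) (x i + y i)) : ℂ) *
        ((W (Q t) ⊗ₖ Zpow (y t)) * seq n m p G H (extendByZero ms) t ρ).trace =
      (∏ i ∈ range (t + 1), (pauliFidelity p (x i) (y i) (Q i) : ℂ)) *
        (Gᴴ * (W (Q 0) ⊗ₖ Zpow (x 0)) * G * ρ).trace := by
  induction t with
  | zero =>
    rw [← (Equiv.funUnique (Fin 1) _).symm.sum_comp]
    simpa [extendByZero, seq] using sum_sgn_mul_trace_instT p G (x 0) (y 0) (Q 0) ρ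
  | succ t ih =>
    rw [← (Fin.snocEquiv fun _ => Fin n → ZMod 2).sum_comp, Fintype.sum_prod_type, Finset.sum_comm,
      prod_range_succ, mul_comm _ (pauliFidelity p _ _ _ : ℂ), mul_assoc,
      ← ih (fun i hi => hHunitary i (by omega)) (fun i hi => hH i (by omega)), mul_sum]
    refine sum_congr rfl fun ms _ => ?_
    have hterm : ∀ k : Fin n → ZMod 2,
        (sgn (∑ i : Fin (t + 2), dot (Fin.snoc (α := fun _ => Fin n → ZMod 2) ms k i) (x i + y i))
          : ℂ) * ((W (Q (t + 1)) ⊗ₖ Zpow (y (t + 1))) *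
            seq n m p G H (extendByZero (Fin.snoc ms k : Fin (t + 2) → _)) (t + 1) ρ).trace =
        sgn (∑ i : Fin (t + 1), dot (ms i) (x i + y i)) *
          (sgn (dot k (x (t + 1) + y (t + 1))) * ((W (Q (t + 1)) ⊗ₖ Zpow (y (t + 1))) *
            instT n m p G k (H t * seq n m p G H (extendByZero ms) t ρ * (H t)ᴴ)).trace) := by
      intro k
      simp only [seq_extendByZero_snoc, Fin.sum_univ_castSucc, Fin.snoc_castSucc, Fin.snoc_last,
        Fin.val_castSucc, Fin.val_last, sgn_add]
      push_cast
      ring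
    simp only [Fin.snocEquiv, Equiv.coe_fn_mk, hterm]
    rw [← mul_sum, sum_sgn_mul_trace_instT, ← hH t t.lt_succ_self,
      trace_conj_mul_conj (hHunitary t t.lt_succ_self)]
    ring

end Sequence

/-- Indices are shifted by one relative to the paper:
the paper's `x_i, y_i, Q_i, H_i, m_i` (for `i = 1, …, l`) are `x (i-1)` etc. here. -/
theorem stmt_4_general (n m : ℕ)
    (p : (Fin n → ZMod 2) × (Fin n → ZMod 2) × V m → ℝ)
    (lam : (Fin n → ZMod 2) → (Fin n → ZMod 2) → V m → ℝ)
    (hlam : ∀ (x y : Fin n → ZMod 2) (Q : V m),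
      lam x y Q = ∑ a : Fin n → ZMod 2, ∑ b : Fin n → ZMod 2, ∑ P : V m,
        sgn (dot a x + dot b y + sympl P Q) * p (a, b, P))
    (G : MatP m n)
    (l : ℕ) (hl : 1 ≤ l)
    (x y : ℕ → Fin n → ZMod 2) (Q : ℕ → V m) (H : ℕ → MatP m n)
    (hHunitary : ∀ i, i + 1 < l → H i * (H i)ᴴ = 1 ∧ (H i)ᴴ * H i = 1)
    (hH : ∀ i, i + 1 < l →
      H i * (W (Q i) ⊗ₖ Zpow (y i)) * (H i)ᴴ =
        Gᴴ * (W (Q (i + 1)) ⊗ₖ Zpow (x (i + 1))) * G)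
    (ρ : MatP m n) :
    ∑ ms : Fin l → (Fin n → ZMod 2),
      ((sgn (∑ i : Fin l, dot (ms i) (x (i : ℕ) + y (i : ℕ))) : ℂ) *
        ((W (Q (l - 1)) ⊗ₖ Zpow (y (l - 1))) *
          seq n m p G H (fun i => if h : i < l then ms ⟨i, h⟩ else 0) (l - 1) ρ).trace)
    = (∏ i ∈ Finset.range l, (lam (x i) (y i) (Q i) : ℂ)) *
        (Gᴴ * (W (Q 0) ⊗ₖ Zpow (x 0)) * G * ρ).trace := by
  obtain ⟨t, rfl⟩ := Nat.exists_eq_add_of_le' hl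
  obtain rfl : lam = pauliFidelity p := funext fun x => funext fun y => funext (hlam x y)
  exact sum_sgn_mul_trace_seq p G H x y Q t (fun i hi => (hHunitary i (by omega)).2)
    (fun i hi => hH i (by omega)) ρ

/-- Core identity underlying the generalized cycle benchmarking protocol
(Theorem 1 of the paper). Indices are shifted by one relative to the paper:
the paper's `x_i, y_i, Q_i, H_i, m_i` (for `i = 1, …, l`) are `x (i-1)` etc. here. -/
theorem stmt_4 (n m : ℕ)
    (p : (Fin n → ZMod 2) × (Fin n → ZMod 2) × V m → ℝ)
    (lam : (Fin n → ZMod 2) → (Fin n → ZMod 2) → V m → ℝ)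
    (hlam : ∀ (x y : Fin n → ZMod 2) (Q : V m),
      lam x y Q = ∑ a : Fin n → ZMod 2, ∑ b : Fin n → ZMod 2, ∑ P : V m,
        sgn (dot a x + dot b y + sympl P Q) * p (a, b, P))
    (G : MatP m n) (hG : G * Gᴴ = 1) (hG' : Gᴴ * G = 1)
    (l : ℕ) (hl : 1 ≤ l)
    (x y : ℕ → Fin n → ZMod 2) (Q : ℕ → V m) (H : ℕ → MatP m n)
    (hHunitary : ∀ i, i + 1 < l → H i * (H i)ᴴ = 1 ∧ (H i)ᴴ * H i = 1)
    (hH : ∀ i, i + 1 < l →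
      H i * (W (Q i) ⊗ₖ Zpow (y i)) * (H i)ᴴ =
        Gᴴ * (W (Q (i + 1)) ⊗ₖ Zpow (x (i + 1))) * G)
    (ρ : MatP m n) :
    ∑ ms : Fin l → (Fin n → ZMod 2),
      ((sgn (∑ i : Fin l, dot (ms i) (x (i : ℕ) + y (i : ℕ))) : ℂ) *
        ((W (Q (l - 1)) ⊗ₖ Zpow (y (l - 1))) *
          seq n m p G H (fun i => if h : i < l then ms ⟨i, h⟩ else 0) (l - 1) ρ).trace)
    = (∏ i ∈ Finset.range l, (lam (x i) (y i) (Q i) : ℂ)) *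
        (Gᴴ * (W (Q 0) ⊗ₖ Zpow (x 0)) * G * ρ).trace :=
  stmt_4_general n m p lam hlam G l hl x y Q H hHunitary hH ρ
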